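/- (Yoshihara–Heinrich inequality) For any 𝒜⊗ℬ-measurable function h: Ω × Ω → ℝ and any δ > 0, ∫|h| d|P_{𝒜⊗ℬ} − P_𝒜⊗P_ℬ| ≤ 2 · max{ (∫|h|^{1+δ} dP_{𝒜⊗ℬ})^{1/(1+δ)}, (∫|h|^{1+δ} d(P_𝒜⊗P_ℬ))^{1/(1+δ)} } · β(𝒜,ℬ)^{δ/(1+δ)}. -/

import Mathlib

open MeasureTheory ENNReal

/-!
Let `μ` be the diagonal law and `ν` the product of the restrictions, and write
`τ = (μ - ν) + (ν - μ)` for the total variation of `μ - ν`. Hölder's inequality with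
exponents `1 + δ` and `(1 + δ) / δ` against the finite measure `τ` gives
`∫ |h| dτ ≤ ‖h‖_{L^{1+δ}(τ)} · τ(Ω)^{δ/(1+δ)}`. Since `τ ≤ μ + ν`, the first factor is at most
`2^{1/(1+δ)}` times the larger of the two `L^{1+δ}` norms, and a Hahn decomposition shows
`(μ - ν)(Ω) = μ(S) - ν(S)` for a measurable `S`, so `τ(Ω) ≤ 2β`. The powers of `2` multiply to `2`.
-/

/-- The β-mixing (absolute regularity) coefficient of two sub-σ-algebras
`mA, mB` of a probability space `(Ω, m0, P)`: the total-variation-type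
supremum, over sets `C` measurable for the product σ-algebra `mA ⊗ mB`, of
the discrepancy between the diagonal pushforward of `P` and the product of
the restrictions of `P` to `mA` and `mB`. -/
noncomputable def betaMix {Ω : Type*} {m0 : MeasurableSpace Ω} (P : Measure Ω)
    (mA mB : MeasurableSpace Ω) (hA : mA ≤ m0) (hB : mB ≤ m0) : ℝ≥0∞ :=
  ⨆ (C : Set (Ω × Ω)) (_ : MeasurableSet[mA.prod mB] C),
    (P ((fun ω => (ω, ω)) ⁻¹' C)
        - (@Measure.prod Ω Ω mA mB (P.trim hA) (P.trim hB)) C) ⊔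
      ((@Measure.prod Ω Ω mA mB (P.trim hA) (P.trim hB)) C
        - P ((fun ω => (ω, ω)) ⁻¹' C))


/-- The diagonal pushforward of `P`, as a measure on `Ω × Ω` equipped with the
product σ-algebra `mA ⊗ mB` of two sub-σ-algebras. -/
noncomputable def diagMeasure {Ω : Type*} (m0 : MeasurableSpace Ω) (P : Measure Ω)
    (mA mB : MeasurableSpace Ω) : @Measure (Ω × Ω) (mA.prod mB) :=
  @Measure.map Ω (Ω × Ω) m0 (mA.prod mB) (fun ω => (ω, ω)) P

/-- The product of the restrictions (trims) of `P` to two sub-σ-algebras,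
as a measure on `Ω × Ω` with the σ-algebra `mA ⊗ mB`. -/
noncomputable def prodTrim {Ω : Type*} {m0 : MeasurableSpace Ω} (P : Measure Ω)
    (mA mB : MeasurableSpace Ω) (hA : mA ≤ m0) (hB : mB ≤ m0) :
    @Measure (Ω × Ω) (mA.prod mB) :=
  @Measure.prod Ω Ω mA mB (P.trim hA) (P.trim hB)

namespace MeasureTheory

variable {α : Type*} {mα : MeasurableSpace α}

theorem Measure.sub_apply_univ_le {μ ν : Measure α} [IsFiniteMeasure μ] [IsFiniteMeasure ν]
    {c : ℝ≥0∞} (hc : ∀ s, MeasurableSet s → μ s - ν s ≤ c) : (μ - ν) Set.univ ≤ c := by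
  obtain ⟨s, hs⟩ := exists_isHahnDecomposition ν μ
  calc (μ - ν) Set.univ = (μ - ν) s := by
        rw [← measure_add_measure_compl hs.measurableSet,
          sub_apply_eq_zero_of_isHahnDecomposition hs.compl, add_zero]
    _ = μ s - ν s := by
        rw [← Measure.restrict_apply_univ, Measure.restrict_sub_eq_restrict_sub_restrict
          hs.measurableSet, Measure.sub_apply MeasurableSet.univ hs.le_on,
          Measure.restrict_apply_univ, Measure.restrict_apply_univ]
    _ ≤ c := hc s hs.measurableSet

theorem Measure.sub_add_sub_apply_univ_le {μ ν : Measure α} [IsFiniteMeasure μ]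
    [IsFiniteMeasure ν] {c : ℝ≥0∞} (hc : ∀ s, MeasurableSet s → (μ s - ν s) ⊔ (ν s - μ s) ≤ c) :
    ((μ - ν) + (ν - μ)) Set.univ ≤ 2 * c := by
  rw [Measure.add_apply, two_mul]
  exact add_le_add (sub_apply_univ_le fun s hs => le_sup_left.trans (hc s hs))
    (sub_apply_univ_le fun s hs => le_sup_right.trans (hc s hs))

theorem eLpNorm'_sub_add_sub_le {ε : Type*} [ENorm ε] (f : α → ε) (μ ν : Measure α) {q : ℝ}
    (hq : 0 < q) :
    eLpNorm' f q ((μ - ν) + (ν - μ)) ≤ 2 ^ (1 / q) * max (eLpNorm' f q μ) (eLpNorm' f q ν) := by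
  have hmono : Monotone fun x : ℝ≥0∞ => x ^ (1 / q) :=
    ENNReal.monotone_rpow_of_nonneg (by positivity)
  simp only [eLpNorm'_eq_lintegral_enorm]
  rw [← hmono.map_max, ← ENNReal.mul_rpow_of_nonneg _ _ (by positivity)]
  refine hmono ?_
  rw [lintegral_add_measure, two_mul]
  exact add_le_add ((lintegral_mono' Measure.sub_le le_rfl).trans le_sup_left)
    ((lintegral_mono' Measure.sub_le le_rfl).trans le_sup_right)

theorem lintegral_enorm_sub_add_sub_le {ε : Type*} [TopologicalSpace ε] [ContinuousENorm ε]
    {μ ν : Measure α} [IsFiniteMeasure μ] [IsFiniteMeasure ν] {f : α → ε}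
    (hf : AEStronglyMeasurable f ((μ - ν) + (ν - μ))) {δ : ℝ} (hδ : 0 < δ) {β : ℝ≥0∞}
    (hβ : ∀ s, MeasurableSet s → (μ s - ν s) ⊔ (ν s - μ s) ≤ β) :
    ∫⁻ x, ‖f x‖ₑ ∂((μ - ν) + (ν - μ)) ≤
      2 * max (eLpNorm' f (1 + δ) μ) (eLpNorm' f (1 + δ) ν) * β ^ (δ / (1 + δ)) := by
  set p := 1 + δ
  have hp : 0 < p := by positivity
  have hexp : 1 / 1 - 1 / p = δ / p := by field_simp; ring
  set M := max (eLpNorm' f p μ) (eLpNorm' f p ν)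
  calc ∫⁻ x, ‖f x‖ₑ ∂((μ - ν) + (ν - μ)) = eLpNorm' f 1 ((μ - ν) + (ν - μ)) := by
        simp [eLpNorm'_eq_lintegral_enorm]
    _ ≤ eLpNorm' f p ((μ - ν) + (ν - μ)) * ((μ - ν) + (ν - μ)) Set.univ ^ (δ / p) := by
        rw [← hexp]
        exact eLpNorm'_le_eLpNorm'_mul_rpow_measure_univ one_pos (by simp [p, hδ.le]) hf
    _ ≤ 2 ^ (1 / p) * M * (2 * β) ^ (δ / p) := by
        gcongr
        · exact eLpNorm'_sub_add_sub_le f μ ν hp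
        · exact Measure.sub_add_sub_apply_univ_le hβ
    _ = 2 ^ (1 / p + δ / p) * M * β ^ (δ / p) := by
        rw [ENNReal.mul_rpow_of_nonneg _ _ (by positivity),
          ENNReal.rpow_add _ _ two_ne_zero ofNat_ne_top]
        ring
    _ = 2 * M * β ^ (δ / p) := by
        rw [← add_div, div_self hp.ne', ENNReal.rpow_one]

end MeasureTheory

section DiagonalCoupling

variable {Ω : Type*} {m0 : MeasurableSpace Ω} (P : Measure Ω) {mA mB : MeasurableSpace Ω}

theorem measurable_diag_prod (hA : mA ≤ m0) (hB : mB ≤ m0) :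
    Measurable[m0, mA.prod mB] fun ω : Ω => (ω, ω) :=
  (measurable_id'' hA).prodMk (measurable_id'' hB)

theorem diagMeasure_apply (hA : mA ≤ m0) (hB : mB ≤ m0) {C : Set (Ω × Ω)}
    (hC : MeasurableSet[mA.prod mB] C) :
    diagMeasure m0 P mA mB C = P ((fun ω => (ω, ω)) ⁻¹' C) :=
  Measure.map_apply (measurable_diag_prod hA hB) hC

instance isFiniteMeasure_diagMeasure [IsFiniteMeasure P] :
    IsFiniteMeasure (diagMeasure m0 P mA mB) := by
  unfold diagMeasure; infer_instance

instance isFiniteMeasure_prodTrim (hA : mA ≤ m0) (hB : mB ≤ m0) [IsFiniteMeasure P] :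
    IsFiniteMeasure (prodTrim P mA mB hA hB) := by
  have := isFiniteMeasure_trim (μ := P) hA
  have := isFiniteMeasure_trim (μ := P) hB
  unfold prodTrim; infer_instance

theorem le_betaMix (hA : mA ≤ m0) (hB : mB ≤ m0) {C : Set (Ω × Ω)}
    (hC : MeasurableSet[mA.prod mB] C) :
    (diagMeasure m0 P mA mB C - prodTrim P mA mB hA hB C) ⊔
        (prodTrim P mA mB hA hB C - diagMeasure m0 P mA mB C) ≤ betaMix P mA mB hA hB := by
  rw [diagMeasure_apply P hA hB hC]
  exact le_iSup₂_of_le C hC le_rfl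

end DiagonalCoupling

/-- **Yoshihara–Heinrich inequality.** For any `mA ⊗ mB`-measurable
`h : Ω × Ω → ℝ` and any `δ > 0`,
`∫ |h| d|P_{A⊗B} − P_A ⊗ P_B| ≤ 2 max{‖h‖_{1+δ, P_{A⊗B}}, ‖h‖_{1+δ, P_A⊗P_B}} β(A,B)^{δ/(1+δ)}`,
where the total variation `|μ − ν|` of the difference of the two finite
measures is `(μ - ν) + (ν - μ)` (truncated subtraction of measures). -/
theorem yoshihara_heinrich {Ω : Type*} {m0 : MeasurableSpace Ω} (P : Measure Ω)
    [IsProbabilityMeasure P]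
    (mA mB : MeasurableSpace Ω) (hA : mA ≤ m0) (hB : mB ≤ m0)
    (h : Ω × Ω → ℝ) (hmeas : Measurable[mA.prod mB] h) (δ : ℝ) (hδ : 0 < δ) :
    ∫⁻ x, (‖h x‖₊ : ℝ≥0∞)
        ∂((diagMeasure m0 P mA mB - prodTrim P mA mB hA hB)
            + (prodTrim P mA mB hA hB - diagMeasure m0 P mA mB))
      ≤ 2 *
        max ((∫⁻ x, (‖h x‖₊ : ℝ≥0∞) ^ (1 + δ) ∂(diagMeasure m0 P mA mB))
              ^ (1 / (1 + δ)))
            ((∫⁻ x, (‖h x‖₊ : ℝ≥0∞) ^ (1 + δ) ∂(prodTrim P mA mB hA hB))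
              ^ (1 / (1 + δ)))
        * (betaMix P mA mB hA hB) ^ (δ / (1 + δ)) := by
  exact lintegral_enorm_sub_add_sub_le (mα := mA.prod mB) hmeas.aestronglyMeasurable hδ
    fun C hC => le_betaMix P hA hB hC
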